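/- Let n ∈ ℕ, p ∈ [0,1]^n, and let f : {0,1}^n → ℝ be monotone and 1-Lipschitz. Let k ≥ 1 be a real number with √(log k / k) ≤ 1, and set s = √(log k / k). Then the measure under μ_{e^{-s}p} of the set {x ∈ {0,1}^n : f(x) ≥ ∫ f dμ_p + √(k · log k)} is at most 1/k. -/

import Mathlib

open MeasureTheory

/-- The Bernoulli measure on `Bool` with parameter `q`. -/
noncomputable def bernoulliMeasure (q : ℝ) : Measure Bool :=
  (ENNReal.ofReal q) • Measure.dirac true + (ENNReal.ofReal (1 - q)) • Measure.dirac false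

/-- The product Bernoulli measure `μ_p` on `{0,1}^n`. -/
noncomputable def productBernoulli {n : ℕ} (p : Fin n → ℝ) : Measure (Fin n → Bool) :=
  Measure.pi fun i => bernoulliMeasure (p i)

/-- `f` is 1-Lipschitz with respect to the Hamming distance on `{0,1}^n`. -/
def OneLipschitz {n : ℕ} (f : (Fin n → Bool) → ℝ) : Prop :=
  ∀ x y : Fin n → Bool,
    |f x - f y| ≤ (Finset.univ.filter fun i => x i ≠ y i).card

/-!
Chernoff's method: it suffices to bound the moment generating function,
`E_{e^{-s}p}[e^{s f}] ≤ e^{s E_p f}` for `s ≥ 0`. Conditioning on the first coordinate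
`X₀ ~ Bernoulli(q)`, and writing `δ = f(1, x) - f(0, x) ∈ [0, 1]`, this reduces by induction on
`n` to the one-coordinate bound `1 - e^{-s} q + e^{-s} q e^{s δ} ≤ e^{s q δ}` (convexity of `exp`
and `1 - e^{-s} ≤ s`), because the averaged function `(1 - q) f(0, ·) + q f(1, ·)` is again
monotone and 1-Lipschitz. Markov's inequality at `s = √(log k / k)` and threshold
`t = √(k log k)`, where `s t = log k`, then gives the bound `1 / k`.
-/

open Finset Real

lemma oneLipschitz_iff_hammingDist {n : ℕ} {f : (Fin n → Bool) → ℝ} :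
    OneLipschitz f ↔ ∀ x y, |f x - f y| ≤ hammingDist x y := Iff.rfl

lemma hammingDist_cons {n : ℕ} (a b : Bool) (x y : Fin n → Bool) :
    hammingDist (Fin.cons a x : Fin (n + 1) → Bool) (Fin.cons b y) =
      (if a = b then 0 else 1) + hammingDist x y := by
  simp only [hammingDist, card_filter, Fin.sum_univ_succ, Fin.cons_zero, Fin.cons_succ, ne_eq,
    ite_not]

namespace OneLipschitz

variable {n : ℕ}

lemma comp_cons {f : (Fin (n + 1) → Bool) → ℝ} (hf : OneLipschitz f) (b : Bool) :
    OneLipschitz fun x => f (Fin.cons b x) := by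
  rw [oneLipschitz_iff_hammingDist] at hf ⊢
  intro x y
  simpa [hammingDist_cons] using hf (Fin.cons b x) (Fin.cons b y)

lemma convex_comb {g₀ g₁ : (Fin n → Bool) → ℝ} (h₀ : OneLipschitz g₀) (h₁ : OneLipschitz g₁)
    {q : ℝ} (hq : q ∈ Set.Icc (0 : ℝ) 1) :
    OneLipschitz fun x => (1 - q) * g₀ x + q * g₁ x := by
  rw [oneLipschitz_iff_hammingDist] at h₀ h₁ ⊢
  intro x y
  obtain ⟨hq₀, hq₁⟩ := hq
  have hq₁' : 0 ≤ 1 - q := sub_nonneg.2 hq₁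
  calc |(1 - q) * g₀ x + q * g₁ x - ((1 - q) * g₀ y + q * g₁ y)|
      = |(1 - q) * (g₀ x - g₀ y) + q * (g₁ x - g₁ y)| := by ring_nf
    _ ≤ (1 - q) * |g₀ x - g₀ y| + q * |g₁ x - g₁ y| := by
      refine (abs_add_le _ _).trans_eq ?_
      rw [abs_mul, abs_mul, abs_of_nonneg hq₁', abs_of_nonneg hq₀]
    _ ≤ (1 - q) * hammingDist x y + q * hammingDist x y := by
      gcongr <;> apply_assumption
    _ = hammingDist x y := by ring

end OneLipschitz

lemma cons_true_sub_cons_false_mem_Icc {n : ℕ} {f : (Fin (n + 1) → Bool) → ℝ}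
    (hf_mono : Monotone f) (hf_lip : OneLipschitz f) (x : Fin n → Bool) :
    f (Fin.cons true x) - f (Fin.cons false x) ∈ Set.Icc (0 : ℝ) 1 := by
  refine ⟨sub_nonneg.2 (hf_mono (Fin.cons_le_cons.2 ⟨Bool.false_le _, le_rfl⟩)), ?_⟩
  rw [oneLipschitz_iff_hammingDist] at hf_lip
  simpa [hammingDist_cons] using (le_abs_self _).trans (hf_lip (Fin.cons true x) (Fin.cons false x))

lemma one_sub_add_mul_exp_le_exp {s q δ : ℝ} (hq : q ∈ Set.Icc (0 : ℝ) 1)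
    (hδ : δ ∈ Set.Icc (0 : ℝ) 1) :
    (1 - exp (-s) * q) + exp (-s) * q * exp (s * δ) ≤ exp (s * (q * δ)) := by
  have hqδ : 0 ≤ q * δ := mul_nonneg hq.1 hδ.1
  have hq' : 0 ≤ exp (-s) * q := mul_nonneg (exp_pos _).le hq.1
  have hconv : exp (s * δ) ≤ 1 - δ + δ * exp s := by
    simpa [mul_comm] using convexOn_exp.2 (Set.mem_univ 0) (Set.mem_univ s)
      (sub_nonneg.2 hδ.2) hδ.1 (sub_add_cancel 1 δ)
  calc (1 - exp (-s) * q) + exp (-s) * q * exp (s * δ)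
      ≤ (1 - exp (-s) * q) + exp (-s) * q * (1 - δ + δ * exp s) := by gcongr
    _ = 1 + q * δ * (1 - exp (-s)) := by
      have hinv : exp (-s) * exp s = 1 := by rw [← exp_add, neg_add_cancel, exp_zero]
      linear_combination q * δ * hinv
    _ ≤ 1 + q * δ * s := by gcongr; linarith [add_one_le_exp (-s)]
    _ ≤ exp (s * (q * δ)) := by linarith [add_one_le_exp (s * (q * δ))]

lemma exp_neg_mul_mem_Icc {s q : ℝ} (hs : 0 ≤ s) (hq : q ∈ Set.Icc (0 : ℝ) 1) :
    exp (-s) * q ∈ Set.Icc (0 : ℝ) 1 :=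
  ⟨mul_nonneg (exp_pos _).le hq.1,
    mul_le_one₀ (exp_le_one_iff.2 (neg_nonpos.2 hs)) hq.1 hq.2⟩

namespace BernoulliCube

variable {n : ℕ}

noncomputable def weight (p : Fin n → ℝ) (x : Fin n → Bool) : ℝ :=
  ∏ i, if x i then p i else 1 - p i

noncomputable def expect (p : Fin n → ℝ) (F : (Fin n → Bool) → ℝ) : ℝ :=
  ∑ x, weight p x * F x

lemma weight_nonneg {p : Fin n → ℝ} (hp : ∀ i, p i ∈ Set.Icc (0 : ℝ) 1) (x : Fin n → Bool) :
    0 ≤ weight p x :=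
  prod_nonneg fun i _ => ite_nonneg (hp i).1 (sub_nonneg.2 (hp i).2)

lemma weight_cons (p : Fin (n + 1) → ℝ) (b : Bool) (x : Fin n → Bool) :
    weight p (Fin.cons b x) = (if b then p 0 else 1 - p 0) * weight (Fin.tail p) x := by
  simp only [weight, Fin.prod_univ_succ, Fin.cons_zero, Fin.cons_succ, Fin.tail]

lemma expect_cons (p : Fin (n + 1) → ℝ) (F : (Fin (n + 1) → Bool) → ℝ) :
    expect p F = expect (Fin.tail p)
      fun x => (1 - p 0) * F (Fin.cons false x) + p 0 * F (Fin.cons true x) := by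
  rw [expect, ← (Fin.consEquiv fun _ => Bool).sum_comp, Fintype.sum_prod_type, Fintype.sum_bool,
    expect, ← sum_add_distrib]
  refine sum_congr rfl fun x _ => ?_
  change weight p (Fin.cons true x) * F (Fin.cons true x)
      + weight p (Fin.cons false x) * F (Fin.cons false x) = _
  simp only [weight_cons, if_true, Bool.false_eq_true, if_false]
  ring

lemma expect_mono {p : Fin n → ℝ} (hp : ∀ i, p i ∈ Set.Icc (0 : ℝ) 1)
    {F G : (Fin n → Bool) → ℝ} (hFG : ∀ x, F x ≤ G x) : expect p F ≤ expect p G :=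
  sum_le_sum fun x _ => mul_le_mul_of_nonneg_left (hFG x) (weight_nonneg hp x)

theorem expect_exp_mul_le_exp_mul_expect (p : Fin n → ℝ) (hp : ∀ i, p i ∈ Set.Icc (0 : ℝ) 1)
    (f : (Fin n → Bool) → ℝ) (hf_mono : Monotone f) (hf_lip : OneLipschitz f) {s : ℝ}
    (hs : 0 ≤ s) :
    expect (fun i => exp (-s) * p i) (fun x => exp (s * f x)) ≤ exp (s * expect p f) := by
  induction n with
  | zero => simp [expect, weight]
  | succ n ih =>
    set q := p 0
    set h : (Fin n → Bool) → ℝ :=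
      fun x => (1 - q) * f (Fin.cons false x) + q * f (Fin.cons true x)
    have cons_mono (b : Bool) :
        Monotone fun x : Fin n → Bool => (Fin.cons b x : Fin (n + 1) → Bool) :=
      fun _ _ hxy => Fin.cons_le_cons.2 ⟨le_rfl, hxy⟩
    have h_mono : Monotone h :=
      ((hf_mono.comp (cons_mono false)).const_mul (sub_nonneg.2 (hp 0).2)).add
        ((hf_mono.comp (cons_mono true)).const_mul (hp 0).1)
    have h_lip : OneLipschitz h :=
      (hf_lip.comp_cons false).convex_comb (hf_lip.comp_cons true) (hp 0)
    have first_coord_bound (x : Fin n → Bool) :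
        (1 - exp (-s) * q) * exp (s * f (Fin.cons false x)) +
            exp (-s) * q * exp (s * f (Fin.cons true x)) ≤ exp (s * h x) := by
      set δ := f (Fin.cons true x) - f (Fin.cons false x)
      have hδ := cons_true_sub_cons_false_mem_Icc hf_mono hf_lip x
      have hexp : exp (s * f (Fin.cons true x)) = exp (s * f (Fin.cons false x)) * exp (s * δ) := by
        rw [← exp_add, ← mul_add, add_sub_cancel]
      calc _ = exp (s * f (Fin.cons false x)) *
              ((1 - exp (-s) * q) + exp (-s) * q * exp (s * δ)) := by rw [hexp]; ring
        _ ≤ exp (s * f (Fin.cons false x)) * exp (s * (q * δ)) := by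
            gcongr; exact one_sub_add_mul_exp_le_exp (hp 0) hδ
        _ = exp (s * h x) := by rw [← exp_add]; simp only [h, δ]; ring_nf
    calc expect (fun i => exp (-s) * p i) (fun x => exp (s * f x))
        ≤ expect (fun i => exp (-s) * Fin.tail p i) (fun x => exp (s * h x)) := by
          rw [expect_cons]
          exact expect_mono (fun i => exp_neg_mul_mem_Icc hs (hp i.succ)) first_coord_bound
      _ ≤ exp (s * expect (Fin.tail p) h) := ih _ (fun i => hp i.succ) h h_mono h_lip
      _ = exp (s * expect p f) := by rw [expect_cons p f]

end BernoulliCube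

open BernoulliCube

instance isFiniteMeasure_bernoulliMeasure (q : ℝ) : IsFiniteMeasure (bernoulliMeasure q) :=
  ⟨by simp [bernoulliMeasure]⟩

instance isFiniteMeasure_productBernoulli {n : ℕ} (p : Fin n → ℝ) :
    IsFiniteMeasure (productBernoulli p) := by
  unfold productBernoulli; infer_instance

lemma bernoulliMeasure_singleton (q : ℝ) (b : Bool) :
    bernoulliMeasure q {b} = ENNReal.ofReal (if b then q else 1 - q) := by
  cases b <;> simp [bernoulliMeasure]

lemma productBernoulli_singleton {n : ℕ} {p : Fin n → ℝ} (hp : ∀ i, p i ∈ Set.Icc (0 : ℝ) 1)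
    (x : Fin n → Bool) : productBernoulli p {x} = ENNReal.ofReal (weight p x) := by
  rw [productBernoulli, ← Set.univ_pi_singleton, Measure.pi_pi, weight,
    ENNReal.ofReal_prod_of_nonneg fun i _ => ite_nonneg (hp i).1 (sub_nonneg.2 (hp i).2)]
  exact prod_congr rfl fun i _ => bernoulliMeasure_singleton (p i) (x i)

lemma integral_productBernoulli {n : ℕ} {p : Fin n → ℝ} (hp : ∀ i, p i ∈ Set.Icc (0 : ℝ) 1)
    (F : (Fin n → Bool) → ℝ) : ∫ x, F x ∂productBernoulli p = expect p F := by
  rw [integral_fintype .of_finite]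
  refine sum_congr rfl fun x _ => ?_
  rw [measureReal_def, productBernoulli_singleton hp, ENNReal.toReal_ofReal (weight_nonneg hp x),
    smul_eq_mul]

theorem mgf_productBernoulli_exp_neg_mul_le {n : ℕ} {p : Fin n → ℝ}
    (hp : ∀ i, p i ∈ Set.Icc (0 : ℝ) 1) {f : (Fin n → Bool) → ℝ} (hf_mono : Monotone f)
    (hf_lip : OneLipschitz f) {s : ℝ} (hs : 0 ≤ s) :
    ProbabilityTheory.mgf f (productBernoulli fun i => exp (-s) * p i) s ≤
      exp (s * ∫ x, f x ∂productBernoulli p) := by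
  rw [ProbabilityTheory.mgf, integral_productBernoulli fun i => exp_neg_mul_mem_Icc hs (hp i),
    integral_productBernoulli hp]
  exact expect_exp_mul_le_exp_mul_expect p hp f hf_mono hf_lip hs

theorem bicriterion_concentration_instantiated_general {n : ℕ} (p : Fin n → ℝ)
    (hp : ∀ i, p i ∈ Set.Icc (0 : ℝ) 1)
    (f : (Fin n → Bool) → ℝ) (hf_mono : Monotone f) (hf_lip : OneLipschitz f)
    (k : ℝ) (hk : 1 ≤ k) :
    productBernoulli (fun i => Real.exp (-Real.sqrt (Real.log k / k)) * p i)
        {x | (∫ y, f y ∂(productBernoulli p)) + Real.sqrt (k * Real.log k) ≤ f x}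
      ≤ ENNReal.ofReal (1 / k) := by
  set s := √(log k / k)
  set t := √(k * log k)
  set M := ∫ y, f y ∂productBernoulli p
  set μ := productBernoulli fun i => exp (-s) * p i
  have hk0 : 0 < k := by linarith
  have hst : s * t = log k := by
    rw [← sqrt_mul (div_nonneg (log_nonneg hk) hk0.le),
      show log k / k * (k * log k) = log k * log k by field_simp, sqrt_mul_self (log_nonneg hk)]
  rw [← ENNReal.ofReal_toReal (measure_ne_top μ _)]
  refine ENNReal.ofReal_le_ofReal ?_
  calc μ.real {x | M + t ≤ f x}
      ≤ exp (-s * (M + t)) * ProbabilityTheory.mgf f μ s :=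
        ProbabilityTheory.measure_ge_le_exp_mul_mgf _ (sqrt_nonneg _) .of_finite
    _ ≤ exp (-s * (M + t)) * exp (s * M) := by
        gcongr; exact mgf_productBernoulli_exp_neg_mul_le hp hf_mono hf_lip (sqrt_nonneg _)
    _ = exp (-(s * t)) := by rw [← exp_add]; ring_nf
    _ = 1 / k := by rw [hst, exp_neg, exp_log hk0, one_div]

/-- For a monotone 1-Lipschitz `f`, a real `k ≥ 1` with `√(log k / k) ≤ 1`, and
`s = √(log k / k)`: `Pr[f(X^{(s)}) ≥ E[f(X)] + √(k log k)] ≤ 1/k`. -/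
theorem bicriterion_concentration_instantiated {n : ℕ} (p : Fin n → ℝ)
    (hp : ∀ i, p i ∈ Set.Icc (0 : ℝ) 1)
    (f : (Fin n → Bool) → ℝ) (hf_mono : Monotone f) (hf_lip : OneLipschitz f)
    (k : ℝ) (hk : 1 ≤ k) (hs : Real.sqrt (Real.log k / k) ≤ 1) :
    productBernoulli (fun i => Real.exp (-Real.sqrt (Real.log k / k)) * p i)
        {x | (∫ y, f y ∂(productBernoulli p)) + Real.sqrt (k * Real.log k) ≤ f x}
      ≤ ENNReal.ofReal (1 / k) :=
  bicriterion_concentration_instantiated_general p hp f hf_mono hf_lip k hk
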